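/- In the twisted ring group model of the compact g₂, the Killing form is negative definite; in the rescaled basis {(1/2)(1,0)gᵢ, (1/(2√3))(0,1)gᵢ : i = 1,...,7}, the Killing form is −1 times the identity matrix (an orthonormal basis of norm −1). -/

import Mathlib

noncomputable section

/-- The underlying 14-dimensional real vector space
`L = R[G^×] = ⊕_{i=1}^{7} (ℝ×ℝ)·gᵢ`, with `R = ℝ×ℝ` and the seven nonzero
elements of `(ZMod 2)³` labelled by `ZMod 7` (index `0` represents `g₇`;
the labelling satisfies `gᵢ + g_{i+1} = g_{i+3}` mod 7). -/
abbrev L : Type := ZMod 7 → ℝ × ℝ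

/-- `σ_{i,i+1}(r,r') = (r * r'P)Q̄θ`, explicitly
`(1/4)((a−3b)a' + 3(a+b)b', (b−3a)b' − (a+b)a')` for `r=(a,b)`, `r'=(a',b')`. -/
def σ1 (r r' : ℝ × ℝ) : ℝ × ℝ :=
  (((r.1 - 3*r.2) * r'.1 + 3*(r.1 + r.2) * r'.2) / 4,
   ((r.2 - 3*r.1) * r'.2 - (r.1 + r.2) * r'.1) / 4)

/-- `σ_{i,i+2}(r,r') = (rP * r'Q̄)θ`, explicitly
`(1/4)((a+3b)(a'−3b'), −(a−b)(a'+b'))`. -/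
def σ2 (r r' : ℝ × ℝ) : ℝ × ℝ :=
  ((r.1 + 3*r.2) * (r'.1 - 3*r'.2) / 4,
   -((r.1 - r.2) * (r'.1 + r'.2)) / 4)

/-- `σ_{i,i+4}(r,r') = (rQ̄ * r')Q̄`, explicitly
`(1/4)((a−3b)a' − 3(a+b)b', (a−3b)a' + (a+b)b')`. -/
def σ4 (r r' : ℝ × ℝ) : ℝ × ℝ :=
  (((r.1 - 3*r.2) * r'.1 - 3*(r.1 + r.2) * r'.2) / 4,
   ((r.1 - 3*r.2) * r'.1 + (r.1 + r.2) * r'.2) / 4)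

/-- The bracket `[r·gᵢ, r'·gⱼ]` of two homogeneous elements: zero for `i = j`,
`σ_{ij}(r,r')·g_{i+j}` otherwise, extended antisymmetrically
(`σ_{ji}(r',r) = −σ_{ij}(r,r')`). -/
def brTerm (i : ZMod 7) (r : ℝ × ℝ) (j : ZMod 7) (r' : ℝ × ℝ) : L :=
  if j = i + 1 then Pi.single (i + 3) (σ1 r r')
  else if j = i + 2 then Pi.single (i + 6) (σ2 r r')
  else if j = i + 4 then Pi.single (i + 5) (σ4 r r')
  else if j = i + 3 then -Pi.single (i + 1) (σ4 r' r)
  else if j = i + 5 then -Pi.single (i + 4) (σ2 r' r)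
  else if j = i + 6 then -Pi.single (i + 2) (σ1 r' r)
  else 0

/-- The bilinear bracket on `L = R^σ[G^×]`. -/
def bracket (x y : L) : L :=
  ∑ i : ZMod 7, ∑ j : ZMod 7, brTerm i (x i) j (y j)

lemma σ1_addl (a b r : ℝ × ℝ) : σ1 (a + b) r = σ1 a r + σ1 b r := by
  simp only [σ1, Prod.mk_add_mk, Prod.ext_iff, Prod.fst_add, Prod.snd_add]
  constructor <;> ring
lemma σ1_addr (r a b : ℝ × ℝ) : σ1 r (a + b) = σ1 r a + σ1 r b := by
  simp only [σ1, Prod.mk_add_mk, Prod.ext_iff, Prod.fst_add, Prod.snd_add]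
  constructor <;> ring
lemma σ2_addl (a b r : ℝ × ℝ) : σ2 (a + b) r = σ2 a r + σ2 b r := by
  simp only [σ2, Prod.mk_add_mk, Prod.ext_iff, Prod.fst_add, Prod.snd_add]
  constructor <;> ring
lemma σ2_addr (r a b : ℝ × ℝ) : σ2 r (a + b) = σ2 r a + σ2 r b := by
  simp only [σ2, Prod.mk_add_mk, Prod.ext_iff, Prod.fst_add, Prod.snd_add]
  constructor <;> ring
lemma σ4_addl (a b r : ℝ × ℝ) : σ4 (a + b) r = σ4 a r + σ4 b r := by
  simp only [σ4, Prod.mk_add_mk, Prod.ext_iff, Prod.fst_add, Prod.snd_add]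
  constructor <;> ring
lemma σ4_addr (r a b : ℝ × ℝ) : σ4 r (a + b) = σ4 r a + σ4 r b := by
  simp only [σ4, Prod.mk_add_mk, Prod.ext_iff, Prod.fst_add, Prod.snd_add]
  constructor <;> ring
lemma σ1_smull (c : ℝ) (a r : ℝ × ℝ) : σ1 (c • a) r = c • σ1 a r := by
  simp only [σ1, Prod.smul_mk, Prod.ext_iff, Prod.smul_fst, Prod.smul_snd, smul_eq_mul]
  constructor <;> ring
lemma σ1_smulr (c : ℝ) (r a : ℝ × ℝ) : σ1 r (c • a) = c • σ1 r a := by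
  simp only [σ1, Prod.smul_mk, Prod.ext_iff, Prod.smul_fst, Prod.smul_snd, smul_eq_mul]
  constructor <;> ring
lemma σ2_smull (c : ℝ) (a r : ℝ × ℝ) : σ2 (c • a) r = c • σ2 a r := by
  simp only [σ2, Prod.smul_mk, Prod.ext_iff, Prod.smul_fst, Prod.smul_snd, smul_eq_mul]
  constructor <;> ring
lemma σ2_smulr (c : ℝ) (r a : ℝ × ℝ) : σ2 r (c • a) = c • σ2 r a := by
  simp only [σ2, Prod.smul_mk, Prod.ext_iff, Prod.smul_fst, Prod.smul_snd, smul_eq_mul]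
  constructor <;> ring
lemma σ4_smull (c : ℝ) (a r : ℝ × ℝ) : σ4 (c • a) r = c • σ4 a r := by
  simp only [σ4, Prod.smul_mk, Prod.ext_iff, Prod.smul_fst, Prod.smul_snd, smul_eq_mul]
  constructor <;> ring
lemma σ4_smulr (c : ℝ) (r a : ℝ × ℝ) : σ4 r (c • a) = c • σ4 r a := by
  simp only [σ4, Prod.smul_mk, Prod.ext_iff, Prod.smul_fst, Prod.smul_snd, smul_eq_mul]
  constructor <;> ring

lemma brTerm_addr (i : ZMod 7) (r : ℝ × ℝ) (j : ZMod 7) (a b : ℝ × ℝ) :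
    brTerm i r j (a + b) = brTerm i r j a + brTerm i r j b := by
  unfold brTerm
  split_ifs <;>
    simp [σ1_addr, σ2_addr, σ4_addr, σ1_addl, σ2_addl, σ4_addl, Pi.single_add] <;>
    abel

lemma brTerm_smulr (i : ZMod 7) (r : ℝ × ℝ) (j : ZMod 7) (c : ℝ) (a : ℝ × ℝ) :
    brTerm i r j (c • a) = c • brTerm i r j a := by
  unfold brTerm
  split_ifs <;>
    simp [σ1_smulr, σ2_smulr, σ4_smulr, σ1_smull, σ2_smull, σ4_smull, Pi.single_smul]

/-- The adjoint operator `ad x = [x, ·]` as a linear endomorphism of `L`. -/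
def ad (x : L) : Module.End ℝ L where
  toFun := bracket x
  map_add' y z := by
    unfold bracket
    rw [← Finset.sum_add_distrib]
    refine Finset.sum_congr rfl fun i _ => ?_
    rw [← Finset.sum_add_distrib]
    exact Finset.sum_congr rfl fun j _ => by simpa using brTerm_addr i (x i) j (y j) (z j)
  map_smul' c y := by
    unfold bracket
    simp only [RingHom.id_apply, Finset.smul_sum]
    refine Finset.sum_congr rfl fun i _ => ?_
    exact Finset.sum_congr rfl fun j _ => by simpa using brTerm_smulr i (x i) j c (y j)

/-- The Killing form `κ(x,y) = tr(ad x ∘ ad y)`. -/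
def killing (x y : L) : ℝ := LinearMap.trace ℝ L (ad x ∘ₗ ad y)

/-- The basis element `(1,0)gᵢ`. -/
def X (i : ZMod 7) : L := Pi.single i (1, 0)
/-- The basis element `(0,1)gᵢ`. -/
def Y (i : ZMod 7) : L := Pi.single i (0, 1)

end

/-- The rescaled basis `{(1/2)(1,0)gᵢ, (1/(2√3))(0,1)gᵢ}`. -/
noncomputable def u (p : ZMod 7 × Fin 2) : L :=
  if p.2 = 0 then (1/2 : ℝ) • X p.1 else (1/(2 * Real.sqrt 3) : ℝ) • Y p.1

/-!
In the trace of `ad x ∘ ad y` over the block `(ℝ×ℝ)·gₖ`, the term through `y j · gⱼ` and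
`x i · gᵢ` lands back in that block only if `gᵢ + gⱼ + gₖ = gₖ`, i.e. `i = j`. Hence the Killing
form is block diagonal, `κ(x, y) = ∑ᵢ κ₀(xᵢ, yᵢ)`, and summing the six `2 × 2` traces
(one for each `k ≠ i`) gives `κ₀((a, b), (a', b')) = -4aa' - 12bb'`. This form is negative
definite, and the scalings `1/2` and `1/(2√3)` normalize it to `-1`.
-/

namespace LinearMap

variable {R : Type*} [CommRing R]

theorem trace_pi {ι : Type*} [Fintype ι] [DecidableEq ι] {M : ι → Type*}
    [∀ i, AddCommGroup (M i)] [∀ i, Module R (M i)] [∀ i, Module.Free R (M i)]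
    [∀ i, Module.Finite R (M i)] (f : Module.End R (∀ i, M i)) :
    trace R _ f = ∑ k, trace R (M k) (proj k ∘ₗ f ∘ₗ single R M k) := by
  let b i := Module.Free.chooseBasis R (M i)
  rw [trace_eq_matrix_trace R (Pi.basis b), Matrix.trace, Fintype.sum_sigma]
  refine Finset.sum_congr rfl fun k _ => ?_
  rw [trace_eq_matrix_trace R (b k), Matrix.trace]
  refine Finset.sum_congr rfl fun s _ => ?_
  simp only [Matrix.diag, toMatrix_apply, Pi.basis_apply, Pi.basis_repr, coe_comp,
    Function.comp_apply, coe_proj, Function.eval, coe_single]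

theorem trace_eq_fst_add_snd (f : Module.End R (R × R)) :
    trace R _ f = (f (1, 0)).1 + (f (0, 1)).2 := by
  rw [trace_eq_matrix_trace R (Module.Basis.finTwoProd R), Matrix.trace, Fin.sum_univ_two]
  simp [toMatrix_apply]

end LinearMap

lemma ZMod.sum_univ_seven {M : Type*} [AddCommMonoid M] (f : ZMod 7 → M) :
    ∑ i, f i = f 0 + f 1 + f 2 + f 3 + f 4 + f 5 + f 6 :=
  Fin.sum_univ_seven f

lemma brTerm_zero_right (i j : ZMod 7) (r : ℝ × ℝ) : brTerm i r j 0 = 0 := by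
  unfold brTerm
  split_ifs <;> simp [σ1, σ2, σ4]

lemma ad_single (x : L) (k : ZMod 7) (r : ℝ × ℝ) :
    ad x (Pi.single k r) = ∑ i, brTerm i (x i) k r := by
  simp only [ad, LinearMap.coe_mk, AddHom.coe_mk, bracket]
  refine Finset.sum_congr rfl fun i _ => ?_
  rw [Fintype.sum_eq_single k fun j hj => by rw [Pi.single_eq_of_ne hj, brTerm_zero_right],
    Pi.single_eq_same]

def killingComponent (r r' : ℝ × ℝ) : ℝ := -4 * r.1 * r'.1 - 12 * r.2 * r'.2

set_option maxHeartbeats 1000000 in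
lemma killing_eq_sum_killingComponent (x y : L) :
    killing x y = ∑ i, killingComponent (x i) (y i) := by
  simp only [killing, LinearMap.trace_pi, LinearMap.trace_eq_fst_add_snd, LinearMap.coe_comp,
    Function.comp_apply, LinearMap.coe_proj, Function.eval, LinearMap.coe_single, ad_single,
    map_sum]
  simp +decide only [ZMod.sum_univ_seven, brTerm, if_true, if_false, map_neg, map_zero, ad_single,
    Pi.add_apply, Pi.neg_apply, Pi.zero_apply, Pi.single_apply, σ1, σ2, σ4,
    Prod.fst_add, Prod.snd_add, Prod.fst_neg, Prod.snd_neg, Prod.fst_zero, Prod.snd_zero,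
    killingComponent]
  ring

lemma killingComponent_self_nonpos (r : ℝ × ℝ) : killingComponent r r ≤ 0 := by
  unfold killingComponent
  nlinarith [sq_nonneg r.1, sq_nonneg r.2]

lemma killingComponent_self_neg {r : ℝ × ℝ} (hr : r ≠ 0) : killingComponent r r < 0 := by
  unfold killingComponent
  have : r.1 ≠ 0 ∨ r.2 ≠ 0 := by
    contrapose! hr
    exact Prod.ext hr.1 hr.2
  rcases this with h | h
  · nlinarith [mul_self_pos.mpr h, sq_nonneg r.2]
  · nlinarith [mul_self_pos.mpr h, sq_nonneg r.1]

lemma killing_self_neg {x : L} (hx : x ≠ 0) : killing x x < 0 := by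
  obtain ⟨i, hi⟩ := Function.ne_iff.mp hx
  rw [killing_eq_sum_killingComponent, ← neg_pos, ← Finset.sum_neg_distrib]
  exact Finset.sum_pos' (fun j _ => neg_nonneg.mpr (killingComponent_self_nonpos _))
    ⟨i, Finset.mem_univ _, neg_pos.mpr (killingComponent_self_neg hi)⟩

lemma killing_single_single (k l : ZMod 7) (r r' : ℝ × ℝ) :
    killing (Pi.single k r) (Pi.single l r') = if k = l then killingComponent r r' else 0 := by
  rw [killing_eq_sum_killingComponent]
  split_ifs with hkl
  · subst hkl
    rw [Fintype.sum_eq_single k fun i hi => by simp [killingComponent, Pi.single_eq_of_ne hi]]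
    simp
  · refine Finset.sum_eq_zero fun i _ => ?_
    rcases eq_or_ne i k with rfl | hik
    · simp [killingComponent, Pi.single_eq_of_ne hkl]
    · simp [killingComponent, Pi.single_eq_of_ne hik]

noncomputable def uComponent (s : Fin 2) : ℝ × ℝ :=
  if s = 0 then (1 / 2, 0) else (0, 1 / (2 * √3))

lemma u_eq_single (p : ZMod 7 × Fin 2) : u p = Pi.single p.1 (uComponent p.2) := by
  unfold u uComponent X Y
  split_ifs <;> simp [← Pi.single_smul]

lemma killingComponent_uComponent (s t : Fin 2) :
    killingComponent (uComponent s) (uComponent t) = if s = t then -1 else 0 := by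
  have h3 : √3 ^ 2 = 3 := Real.sq_sqrt (by norm_num)
  fin_cases s <;> fin_cases t <;> simp [killingComponent, uComponent] <;> field_simp <;> linarith

/-- in the twisted ring group model of the compact `g₂`, the
Killing form is negative definite, and in the rescaled basis
`{(1/2)(1,0)gᵢ, (1/(2√3))(0,1)gᵢ : i = 1,…,7}` its matrix is `−1` times the
identity (an orthonormal basis of norm `−1`). -/
theorem stmt15 :
    (∀ x : L, x ≠ 0 → killing x x < 0) ∧
    (∀ p q : ZMod 7 × Fin 2, killing (u p) (u q) = if p = q then -1 else 0) := by
  refine ⟨fun x hx => killing_self_neg hx, fun ⟨k, s⟩ ⟨l, t⟩ => ?_⟩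
  rw [u_eq_single, u_eq_single, killing_single_single, killingComponent_uComponent]
  simp only [Prod.mk.injEq, ite_and]
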